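/- arXiv:1807.06832 — 3 statements merged into one kernel-verified Lean document; each statement's English description precedes it below -/
import Mathlib

section
/- Let X and X' be extended quasi-metric spaces such that in each space the infimum of the distances d(a,b) over pairs of distinct points a ≠ b is strictly positive. If the magnitude cohomology rings MH^*_*(X) and MH^*_*(X') are isomorphic as bigraded associative unital rings (an isomorphism respecting both the cohomological grading k ∈ ℕ and the length grading ℓ ∈ [0,∞)), then X and X' are isometric, i.e. there is a bijection f : X → X' with d'(f(a),f(b)) = d(a,b) for all a,b ∈ X. -/
/-! Core definitions: magnitude (co)homology of generalised metric spaces. -/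

open scoped ENNReal NNReal Classical
noncomputable section

/-- A generalised metric space (extended pseudo-quasi-metric space):
a set with a distance in `[0,∞]` satisfying `d x x = 0` and the triangle
inequality, but not necessarily symmetry or separation. -/
structure GMS (X : Type*) where
  d : X → X → ℝ≥0∞
  d_self : ∀ x, d x x = 0
  d_triangle : ∀ x y z, d x z ≤ d x y + d y z

variable {X : Type*}

/-- An extended quasi-metric space: distinct points are at nonzero distance. -/
def GMS.Quasi (M : GMS X) : Prop := ∀ x y, M.d x y = 0 → x = y

/-- Consecutive entries of the tuple are distinct, i.e. it is a simplex. -/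
def SepTuple {k : ℕ} (x : Fin (k + 1) → X) : Prop :=
  ∀ i : Fin k, x i.castSucc ≠ x i.succ

/-- The length of a tuple: the sum of consecutive distances. -/
def GMS.len (M : GMS X) {k : ℕ} (x : Fin (k + 1) → X) : ℝ≥0∞ :=
  ∑ i : Fin k, M.d (x i.castSucc) (x i.succ)

/-- A `k`-simplex of length `ℓ` in the generalised metric space `M`. -/
structure MSimplex (M : GMS X) (k : ℕ) (ℓ : ℝ≥0) where
  pts : Fin (k + 1) → X
  sep : SepTuple pts
  len_eq : M.len pts = (ℓ : ℝ≥0∞)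

/-- The magnitude chain group `MC_{k,ℓ}`: the free abelian group on the
`k`-simplices of length `ℓ`. -/
abbrev MC (M : GMS X) (k : ℕ) (ℓ : ℝ≥0) := MSimplex M k ℓ →₀ ℤ

/-- The magnitude cochain group `MC^k_ℓ = Hom(MC_{k,ℓ}, ℤ)`, identified with
the group of all `ℤ`-valued functions on `k`-simplices of length `ℓ`. -/
abbrev MCo (M : GMS X) (k : ℕ) (ℓ : ℝ≥0) := MSimplex M k ℓ → ℤ

/-- Remove the `(j+1)`-st point (an inner point) from a tuple. -/
def faceTuple {k : ℕ} (x : Fin (k + 2) → X) (j : Fin k) : Fin (k + 1) → X :=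
  x ∘ Fin.succAbove ⟨j.val + 1, by have := j.isLt; omega⟩

/-- The condition under which the inner face `∂_{j+1}` of a simplex is a simplex
of the same length: the removed point lies on a geodesic between its
neighbours (and, redundantly in quasi-metric spaces, the face is again a
simplex of the same length). -/
def GMS.FaceOK (M : GMS X) {k : ℕ} {ℓ : ℝ≥0} (s : MSimplex M (k + 1) ℓ) (j : Fin k) : Prop :=
  M.d (s.pts ⟨j.val, by have := j.isLt; omega⟩) (s.pts ⟨j.val + 2, by have := j.isLt; omega⟩) =
      M.d (s.pts ⟨j.val, by have := j.isLt; omega⟩) (s.pts ⟨j.val + 1, by have := j.isLt; omega⟩) +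
      M.d (s.pts ⟨j.val + 1, by have := j.isLt; omega⟩) (s.pts ⟨j.val + 2, by have := j.isLt; omega⟩)
    ∧ SepTuple (faceTuple s.pts j) ∧ M.len (faceTuple s.pts j) = (ℓ : ℝ≥0∞)

/-- The inner face `∂_{j+1}` of a simplex, when defined. -/
def GMS.face (M : GMS X) {k : ℕ} {ℓ : ℝ≥0} (s : MSimplex M (k + 1) ℓ) (j : Fin k)
    (h : M.FaceOK s j) : MSimplex M k ℓ :=
  ⟨faceTuple s.pts j, h.2.1, h.2.2⟩

/-- The magnitude coboundary `∂^* : MC^k_ℓ → MC^{k+1}_ℓ`, dual to the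
differential `∂ = -∂_1 + ∂_2 - ⋯ + (-1)^k ∂_k`. -/
def MCoDelta (M : GMS X) (k : ℕ) (ℓ : ℝ≥0) : MCo M k ℓ →ₗ[ℤ] MCo M (k + 1) ℓ where
  toFun φ := fun s => ∑ j : Fin k, (-1 : ℤ) ^ (j.val + 1) *
      (if h : M.FaceOK s j then φ (M.face s j h) else 0)
  map_add' φ ψ := by
    funext s
    simp only [Pi.add_apply]
    rw [← Finset.sum_add_distrib]
    refine Finset.sum_congr rfl fun j _ => ?_
    split <;> ring
  map_smul' z φ := by
    funext s
    simp only [Pi.smul_apply, smul_eq_mul, RingHom.id_apply]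
    rw [Finset.mul_sum]
    refine Finset.sum_congr rfl fun j _ => ?_
    split <;> ring

/-- Magnitude cocycles in bidegree `(k, ℓ)`. -/
def MCocycle (M : GMS X) (k : ℕ) (ℓ : ℝ≥0) : Submodule ℤ (MCo M k ℓ) :=
  LinearMap.ker (MCoDelta M k ℓ)

/-- Magnitude coboundaries in bidegree `(k, ℓ)` (zero in degree `0`). -/
def MCobound (M : GMS X) : (k : ℕ) → (ℓ : ℝ≥0) → Submodule ℤ (MCo M k ℓ)
  | 0, _ => ⊥
  | (k + 1), ℓ => LinearMap.range (MCoDelta M k ℓ)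

/-- The magnitude cohomology group `MH^k_ℓ(X)`: cocycles modulo coboundaries. -/
abbrev MagCohomology (M : GMS X) (k : ℕ) (ℓ : ℝ≥0) :=
  MCocycle M k ℓ ⧸ (MCobound M k ℓ).comap (MCocycle M k ℓ).subtype

/-- The cohomology class of a cochain (zero if it is not a cocycle). -/
def cohClass (M : GMS X) {k : ℕ} {ℓ : ℝ≥0} (φ : MCo M k ℓ) : MagCohomology M k ℓ :=
  if h : φ ∈ MCocycle M k ℓ then Submodule.Quotient.mk ⟨φ, h⟩ else 0

/-- A representative cocycle of a magnitude cohomology class. -/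
def MHout (M : GMS X) {k : ℕ} {ℓ : ℝ≥0} (α : MagCohomology M k ℓ) : MCo M k ℓ :=
  ((Submodule.Quotient.mk_surjective _) α).choose.val

/-- The first `j+1` points of a `(j+k)`-simplex. -/
def frontT (j k : ℕ) (x : Fin (j + k + 1) → X) : Fin (j + 1) → X :=
  fun i => x ⟨i.val, by have := i.isLt; omega⟩

/-- The last `k+1` points of a `(j+k)`-simplex. -/
def backT (j k : ℕ) (x : Fin (j + k + 1) → X) : Fin (k + 1) → X :=
  fun i => x ⟨j + i.val, by have := i.isLt; omega⟩

lemma SepTuple.front {j k : ℕ} {x : Fin (j + k + 1) → X} (h : SepTuple x) :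
    SepTuple (frontT j k x) := by
  intro i
  have hi := i.isLt
  exact h ⟨i.val, by omega⟩

lemma SepTuple.back {j k : ℕ} {x : Fin (j + k + 1) → X} (h : SepTuple x) :
    SepTuple (backT j k x) := by
  intro i
  have hi := i.isLt
  exact h ⟨j + i.val, by omega⟩

/-- The product of magnitude cochains:
`(φ·ψ)(x_0,…,x_{j+k}) = φ(x_0,…,x_j) · ψ(x_j,…,x_{j+k})`,
where a cochain of length-degree `ℓ` vanishes on simplices of other lengths. -/
def MCup (M : GMS X) {j k : ℕ} {ℓ m : ℝ≥0} (φ : MCo M j ℓ) (ψ : MCo M k m) :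
    MCo M (j + k) (ℓ + m) :=
  fun s =>
    if h : M.len (frontT j k s.pts) = (ℓ : ℝ≥0∞) ∧ M.len (backT j k s.pts) = (m : ℝ≥0∞) then
      φ ⟨frontT j k s.pts, s.sep.front, h.1⟩ * ψ ⟨backT j k s.pts, s.sep.back, h.2⟩
    else 0

/-- The unit cochain `u ∈ MC^0_0`, with `u(x_0) = 1`. -/
def MCoUnit (M : GMS X) : MCo M 0 0 := fun _ => 1

/-- Transport of magnitude cohomology classes along equalities of bidegrees. -/
def MHcast (M : GMS X) {k k' : ℕ} {ℓ ℓ' : ℝ≥0} (hk : k = k') (hl : ℓ = ℓ')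
    (α : MagCohomology M k ℓ) : MagCohomology M k' ℓ' := hk ▸ hl ▸ α

/-- Transport of magnitude cochains along equalities of bidegrees. -/
def MCoCast (M : GMS X) {k k' : ℕ} {ℓ ℓ' : ℝ≥0} (hk : k = k') (hl : ℓ = ℓ')
    (φ : MCo M k ℓ) : MCo M k' ℓ' := hk ▸ hl ▸ φ

/-- The product on magnitude cohomology induced by the product of cochains. -/
def MHmul (M : GMS X) {j k : ℕ} {ℓ m : ℝ≥0} (α : MagCohomology M j ℓ)
    (β : MagCohomology M k m) : MagCohomology M (j + k) (ℓ + m) :=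
  cohClass M (MCup M (MHout M α) (MHout M β))

/-- The unit of the magnitude cohomology ring. -/
def MHone (M : GMS X) : MagCohomology M 0 0 := cohClass M (MCoUnit M)

/-- Two points are adjacent: their distance is nonzero and finite, and no
third point lies strictly between them. -/
def GMS.Adjacent (M : GMS X) (x y : X) : Prop :=
  M.d x y ≠ 0 ∧ M.d x y ≠ ∞ ∧ ∀ a, M.d x y = M.d x a + M.d a y → a = x ∨ a = y

/-- An isomorphism of magnitude cohomology rings: a family of additive
isomorphisms respecting both gradings, the product, and the unit. -/
def MHRingIso {Y : Type*} (M : GMS X) (M' : GMS Y) : Prop :=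
  ∃ e : ∀ (k : ℕ) (ℓ : ℝ≥0), MagCohomology M k ℓ ≃+ MagCohomology M' k ℓ,
    (e 0 0 (MHone M) = MHone M') ∧
    ∀ (j k : ℕ) (ℓ m : ℝ≥0) (α : MagCohomology M j ℓ) (β : MagCohomology M k m),
      e (j + k) (ℓ + m) (MHmul M α β) = MHmul M' (e j ℓ α) (e k m β)

/-!
The ring structure recovers the points and the adjacency relation of `X`, and the positive
infimum of distances lets adjacency recover the metric.

In bidegree `(0,0)` there are no coboundaries and every cochain is a cocycle, so `MH^0_0(X)` is
the ring `ℤ^X`; its minimal idempotents are the indicators `[x]` of the points, and a ring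
isomorphism permutes them, giving a bijection `σ : X ≃ X'`. In degree `1` there are no
coboundaries either, and a `1`-cochain is a cocycle exactly when it vanishes on the pairs
`(x, y)` that have a point strictly between them; hence `[x] · α · [y] ≠ 0` for some
`α ∈ MH^1_ℓ` exactly when `x, y` are adjacent at distance `ℓ`, and `σ` preserves adjacent
pairs together with their distances. Finally, if `d(a, b) ≥ r > 0` for `a ≠ b`, induction on
`⌈d(x, y) / r⌉` splits a non-adjacent pair at an intermediate point into two strictly shorter
ones, so a map that does not increase the distance of adjacent points does not increase any
distance; applied to `σ` and `σ⁻¹` this makes `σ` an isometry.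
-/

section Metric

def GMS.HasInteriorPoint (M : GMS X) (x y : X) : Prop :=
  ∃ a, a ≠ x ∧ a ≠ y ∧ M.d x y = M.d x a + M.d a y

variable {Y : Type*} {M : GMS X} {M' : GMS Y}

lemma GMS.exists_pos_le_d (hpos : 0 < ⨅ (a : X) (b : X) (_ : a ≠ b), M.d a b) :
    ∃ r : ℝ≥0, 0 < r ∧ ∀ a b, a ≠ b → (r : ℝ≥0∞) ≤ M.d a b := by
  obtain ⟨r, hr0, hr⟩ := ENNReal.lt_iff_exists_nnreal_btwn.1 hpos
  exact ⟨r, ENNReal.coe_pos.1 hr0, fun a b hab =>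
    hr.le.trans (iInf_le_of_le a (iInf_le_of_le b (iInf_le _ hab)))⟩

lemma GMS.quasi_of_iInf_pos (hpos : 0 < ⨅ (a : X) (b : X) (_ : a ≠ b), M.d a b) : M.Quasi := by
  obtain ⟨r, hr0, hr⟩ := GMS.exists_pos_le_d hpos
  intro x y hxy
  by_contra hne
  exact not_le.2 (ENNReal.coe_pos.2 hr0) (hxy ▸ hr x y hne)

lemma GMS.adjacent_iff (hq : M.Quasi) {x y : X} :
    M.Adjacent x y ↔ x ≠ y ∧ M.d x y ≠ ∞ ∧ ¬ M.HasInteriorPoint x y := by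
  have hd0 : M.d x y ≠ 0 ↔ x ≠ y :=
    ⟨fun h hxy => h (hxy ▸ M.d_self x), fun h h0 => h (hq x y h0)⟩
  simp only [GMS.Adjacent, GMS.HasInteriorPoint, hd0, not_exists, not_and]
  grind

theorem GMS.d_le_of_adjacent (hpos : 0 < ⨅ (a : X) (b : X) (_ : a ≠ b), M.d a b) (f : X → Y)
    (hf : ∀ a b, M.Adjacent a b → M'.d (f a) (f b) ≤ M.d a b) (x y : X) :
    M'.d (f x) (f y) ≤ M.d x y := by
  obtain ⟨r, hr0, hr⟩ := GMS.exists_pos_le_d hpos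
  suffices key : ∀ n : ℕ, ∀ x y, M.d x y ≤ n * r → M'.d (f x) (f y) ≤ M.d x y by
    rcases eq_or_ne (M.d x y) ∞ with htop | hfin
    · simp [htop]
    obtain ⟨n, hn⟩ := ENNReal.exists_nat_mul_gt (ENNReal.coe_ne_zero.2 hr0.ne') hfin
    exact key n x y hn.le
  intro n
  induction n with
  | zero =>
    intro x y hxy
    obtain rfl : x = y := GMS.quasi_of_iInf_pos hpos x y (by simpa using hxy)
    simp [M'.d_self]
  | succ n ih =>
    intro x y hxy
    by_cases hadj : M.Adjacent x y
    · exact hf x y hadj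
    obtain rfl | hne := eq_or_ne x y
    · simp [M'.d_self]
    have hfin : M.d x y ≠ ∞ := ne_top_of_le_ne_top (by simp [ENNReal.mul_eq_top]) hxy
    obtain ⟨a, hax, hay, hsplit⟩ : M.HasInteriorPoint x y := by
      by_contra h
      exact hadj ((GMS.adjacent_iff (GMS.quasi_of_iInf_pos hpos)).2 ⟨hne, hfin, h⟩)
    have shorter : ∀ u v, M.d u v + r ≤ M.d x y → M.d u v ≤ n * r := fun u v h =>
      (ENNReal.add_le_add_iff_right ENNReal.coe_ne_top).1 <|
        h.trans (hxy.trans_eq (by push_cast; ring))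
    have hxa : M.d x a ≤ n * r :=
      shorter x a (by rw [hsplit]; gcongr; exact hr a y hay)
    have hay' : M.d a y ≤ n * r :=
      shorter a y (by rw [hsplit, add_comm]; gcongr; exact hr x a hax.symm)
    calc M'.d (f x) (f y) ≤ M'.d (f x) (f a) + M'.d (f a) (f y) := M'.d_triangle _ _ _
      _ ≤ M.d x a + M.d a y := add_le_add (ih x a hxa) (ih a y hay')
      _ = M.d x y := hsplit.symm

theorem GMS.d_equiv_eq_of_adjacent_iff (hpos : 0 < ⨅ (a : X) (b : X) (_ : a ≠ b), M.d a b)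
    (hpos' : 0 < ⨅ (a : Y) (b : Y) (_ : a ≠ b), M'.d a b) (σ : X ≃ Y)
    (hσ : ∀ x y (ℓ : ℝ≥0),
      M.Adjacent x y ∧ M.d x y = ℓ ↔ M'.Adjacent (σ x) (σ y) ∧ M'.d (σ x) (σ y) = ℓ)
    (a b : X) : M'.d (σ a) (σ b) = M.d a b := by
  have hle : ∀ x y, M.Adjacent x y → M'.d (σ x) (σ y) ≤ M.d x y := by
    intro x y h
    have hco := (ENNReal.coe_toNNReal h.2.1).symm
    rw [((hσ x y _).1 ⟨h, hco⟩).2, ← hco]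
  have hle' : ∀ x y, M'.Adjacent x y → M.d (σ.symm x) (σ.symm y) ≤ M'.d x y := by
    intro x y h
    have hco := (ENNReal.coe_toNNReal h.2.1).symm
    rw [((hσ (σ.symm x) (σ.symm y) _).2 (by simpa using ⟨h, hco⟩)).2, ← hco]
  refine le_antisymm (GMS.d_le_of_adjacent hpos σ hle a b) ?_
  simpa using GMS.d_le_of_adjacent hpos' σ.symm hle' (σ a) (σ b)

end Metric

section MinimalIdempotent

variable {R S : Type*}

def IsMinimalIdempotent [Semiring R] (p : R) : Prop :=
  IsIdempotentElem p ∧ p ≠ 0 ∧ ∀ q, IsIdempotentElem q → q * p = q → q = 0 ∨ q = p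

lemma IsMinimalIdempotent.map [Semiring R] [Semiring S] (Ψ : R ≃+* S) {p : R}
    (hp : IsMinimalIdempotent p) : IsMinimalIdempotent (Ψ p) := by
  obtain ⟨hidem, hne, hmin⟩ := hp
  refine ⟨hidem.map Ψ, EmbeddingLike.map_ne_zero_iff.2 hne, fun q hq hqp => ?_⟩
  have hqp' : Ψ.symm q * p = Ψ.symm q := by
    simpa using congrArg Ψ.symm hqp
  rcases hmin (Ψ.symm q) (hq.map Ψ.symm) hqp' with h | h
  · exact Or.inl (by simpa using congrArg Ψ h)
  · exact Or.inr (by simpa using congrArg Ψ h)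

variable [Ring R] [IsDomain R] [DecidableEq X]

lemma Pi.single_one_left_injective : Function.Injective fun x : X => Pi.single x (1 : R) :=
  fun x y h => by simpa [Pi.single_apply] using congrFun h x

lemma isMinimalIdempotent_single (x : X) : IsMinimalIdempotent (Pi.single x 1 : X → R) := by
  refine ⟨?_, fun h => one_ne_zero (α := R) (by simpa using congrFun h x), fun q hq hqx => ?_⟩
  · ext a
    by_cases ha : a = x <;> simp [ha]
  have hq_ne : ∀ a, a ≠ x → q a = 0 := fun a ha => by
    simpa [ha] using (congrFun hqx a).symm
  rcases IsIdempotentElem.iff_eq_zero_or_one.1 (congrFun hq x) with h | h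
  · left
    ext a
    by_cases ha : a = x
    · exact ha ▸ h
    · exact hq_ne a ha
  · right
    ext a
    by_cases ha : a = x
    · simp [ha, h]
    · simp [ha, hq_ne a ha]

lemma IsMinimalIdempotent.exists_eq_single {p : X → R} (hp : IsMinimalIdempotent p) :
    ∃ x, p = Pi.single x 1 := by
  obtain ⟨hidem, hne, hmin⟩ := hp
  obtain ⟨x, hx⟩ := Function.ne_iff.1 hne
  have hx1 : p x = 1 :=
    (IsIdempotentElem.iff_eq_zero_or_one.1 (congrFun hidem x)).resolve_left hx
  have hle : Pi.single x 1 * p = Pi.single x 1 := by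
    ext a
    by_cases ha : a = x
    · simp [ha, hx1]
    · simp [ha]
  obtain h | h := hmin _ (isMinimalIdempotent_single x).1 hle
  · exact absurd h (isMinimalIdempotent_single x).2.1
  · exact ⟨x, h.symm⟩

lemma RingEquiv.exists_equiv_map_single {Y : Type*} [DecidableEq Y]
    (Ψ : (X → R) ≃+* (Y → R)) :
    ∃ σ : X ≃ Y, ∀ x, Ψ (Pi.single x 1) = Pi.single (σ x) 1 := by
  choose f hf using fun x => ((isMinimalIdempotent_single (R := R) x).map Ψ).exists_eq_single
  choose g hg using fun y => ((isMinimalIdempotent_single (R := R) y).map Ψ.symm).exists_eq_single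
  refine ⟨⟨f, g, fun x => Pi.single_one_left_injective (R := R) ?_,
    fun y => Pi.single_one_left_injective (R := R) ?_⟩, hf⟩
  · beta_reduce
    rw [← hg, ← hf, Ψ.symm_apply_apply]
  · beta_reduce
    rw [← hf, ← hg, Ψ.apply_symm_apply]

end MinimalIdempotent

section Cohomology

variable {Y : Type*} {M : GMS X} {M' : GMS Y} {k : ℕ} {ℓ ℓ' : ℝ≥0}

@[ext]
lemma MSimplex.ext {s t : MSimplex M k ℓ} (h : s.pts = t.pts) : s = t := by
  cases s; cases t; simp_all

def MSimplex.castLen (h : ℓ = ℓ') (s : MSimplex M k ℓ) : MSimplex M k ℓ' :=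
  ⟨s.pts, s.sep, h ▸ s.len_eq⟩

lemma MCoDelta_zero (ℓ : ℝ≥0) : MCoDelta M 0 ℓ = 0 := by
  ext φ s
  simp [MCoDelta]

lemma mem_MCocycle_zero (φ : MCo M 0 ℓ) : φ ∈ MCocycle M 0 ℓ := by
  simp [MCocycle, MCoDelta_zero]

lemma MCobound_one : MCobound M 1 ℓ = ⊥ :=
  LinearMap.range_eq_bot.2 (MCoDelta_zero ℓ)

lemma MHout_mem (α : MagCohomology M k ℓ) : MHout M α ∈ MCocycle M k ℓ :=
  (Submodule.Quotient.mk_surjective _ α).choose.2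

lemma cohClass_of_mem {φ : MCo M k ℓ} (hφ : φ ∈ MCocycle M k ℓ) :
    cohClass M φ = Submodule.Quotient.mk ⟨φ, hφ⟩ :=
  dif_pos hφ

lemma cohClass_MHout (α : MagCohomology M k ℓ) : cohClass M (MHout M α) = α := by
  rw [cohClass_of_mem (MHout_mem α)]
  exact (Submodule.Quotient.mk_surjective _ α).choose_spec

lemma cohClass_zero : cohClass M (0 : MCo M k ℓ) = 0 := by
  rw [cohClass_of_mem (zero_mem _)]
  rfl

lemma cohClass_add {φ ψ : MCo M k ℓ} (hφ : φ ∈ MCocycle M k ℓ)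
    (hψ : ψ ∈ MCocycle M k ℓ) :
    cohClass M (φ + ψ) = cohClass M φ + cohClass M ψ := by
  rw [cohClass_of_mem (add_mem hφ hψ), cohClass_of_mem hφ, cohClass_of_mem hψ]
  rfl

lemma MHout_cohClass (hb : MCobound M k ℓ = ⊥) {φ : MCo M k ℓ}
    (hφ : φ ∈ MCocycle M k ℓ) :
    MHout M (cohClass M φ) = φ := by
  have h := cohClass_MHout (cohClass M φ)
  rw [cohClass_of_mem (MHout_mem _), cohClass_of_mem hφ, Submodule.Quotient.eq,
    Submodule.mem_comap] at h
  rw [cohClass_of_mem hφ]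
  exact sub_eq_zero.1 (by simpa using (Submodule.eq_bot_iff _).1 hb _ h)

lemma cohClass_eq_zero_iff (hb : MCobound M k ℓ = ⊥) {φ : MCo M k ℓ}
    (hφ : φ ∈ MCocycle M k ℓ) : cohClass M φ = 0 ↔ φ = 0 := by
  refine ⟨fun h => ?_, fun h => h ▸ cohClass_zero⟩
  rw [← MHout_cohClass hb hφ, h, ← cohClass_zero, MHout_cohClass hb (zero_mem _)]

def pointCochain (M : GMS X) (ℓ : ℝ≥0) (g : X → ℤ) : MCo M 0 ℓ := fun s => g (s.pts 0)

def pointSimplex (M : GMS X) (x : X) : MSimplex M 0 0 :=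
  ⟨fun _ => x, fun i => i.elim0, by simp [GMS.len]⟩

lemma pointSimplex_pts_zero (s : MSimplex M 0 0) : pointSimplex M (s.pts 0) = s :=
  MSimplex.ext (funext fun i => by rw [Fin.fin_one_eq_zero i]; rfl)

def degZeroEquiv (M : GMS X) : (X → ℤ) ≃+ MagCohomology M 0 0 where
  toFun g := cohClass M (pointCochain M 0 g)
  invFun α x := MHout M α (pointSimplex M x)
  left_inv g := by
    funext x
    simp only [MHout_cohClass rfl (mem_MCocycle_zero _)]
    rfl
  right_inv α := by
    have h : pointCochain M 0 (fun x => MHout M α (pointSimplex M x)) = MHout M α :=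
      funext fun s => congrArg _ (pointSimplex_pts_zero s)
    simp only [h, cohClass_MHout]
  map_add' g h := cohClass_add (mem_MCocycle_zero _) (mem_MCocycle_zero _)

lemma MHout_degZeroEquiv (g : X → ℤ) : MHout M (degZeroEquiv M g) = pointCochain M 0 g :=
  MHout_cohClass rfl (mem_MCocycle_zero _)

lemma MCup_pointCochain (g h : X → ℤ) :
    MCup M (pointCochain M 0 g) (pointCochain M 0 h) = pointCochain M (0 + 0) (g * h) := by
  funext s
  unfold MCup
  rw [dif_pos ⟨by simp [GMS.len], by simp [GMS.len]⟩]
  rfl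

lemma MHmul_degZeroEquiv (g h : X → ℤ) :
    MHmul M (degZeroEquiv M g) (degZeroEquiv M h) =
      cohClass M (pointCochain M (0 + 0) (g * h)) := by
  rw [MHmul, MHout_degZeroEquiv, MHout_degZeroEquiv, MCup_pointCochain]

def PreservesMHmul
    (e : ∀ (k : ℕ) (ℓ : ℝ≥0), MagCohomology M k ℓ ≃+ MagCohomology M' k ℓ) : Prop :=
  ∀ (j k : ℕ) (ℓ m : ℝ≥0) (α : MagCohomology M j ℓ) (β : MagCohomology M k m),
    e (j + k) (ℓ + m) (MHmul M α β) = MHmul M' (e j ℓ α) (e k m β)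

def degZeroRingEquiv
    (e : ∀ (k : ℕ) (ℓ : ℝ≥0), MagCohomology M k ℓ ≃+ MagCohomology M' k ℓ)
    (hmul : PreservesMHmul e) :
    (X → ℤ) ≃+* (Y → ℤ) :=
  AddEquiv.toRingEquiv ((degZeroEquiv M).trans ((e 0 0).trans (degZeroEquiv M').symm))
    fun g h => by
      -- the length index `0 + 0` of a product in `MH^0_0` is only propositionally `0`
      have H := hmul 0 0 0 0 (degZeroEquiv M g) (degZeroEquiv M h)
      rw [MHmul_degZeroEquiv, ← (degZeroEquiv M').apply_symm_apply (e 0 0 (degZeroEquiv M g)),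
        ← (degZeroEquiv M').apply_symm_apply (e 0 0 (degZeroEquiv M h)), MHmul_degZeroEquiv,
        show (0 : ℝ≥0) + 0 = 0 from add_zero 0] at H
      exact (degZeroEquiv M').symm_apply_eq.2 H

lemma degZeroEquiv_degZeroRingEquiv
    (e : ∀ (k : ℕ) (ℓ : ℝ≥0), MagCohomology M k ℓ ≃+ MagCohomology M' k ℓ)
    (hmul : PreservesMHmul e) (g : X → ℤ) :
    degZeroEquiv M' (degZeroRingEquiv e hmul g) = e 0 0 (degZeroEquiv M g) :=
  (degZeroEquiv M').apply_symm_apply _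

def pointClass (M : GMS X) (x : X) : MagCohomology M 0 0 := degZeroEquiv M (Pi.single x 1)

lemma exists_equiv_map_pointClass
    (e : ∀ (k : ℕ) (ℓ : ℝ≥0), MagCohomology M k ℓ ≃+ MagCohomology M' k ℓ)
    (hmul : PreservesMHmul e) :
    ∃ σ : X ≃ Y, ∀ x, e 0 0 (pointClass M x) = pointClass M' (σ x) := by
  obtain ⟨σ, hσ⟩ := (degZeroRingEquiv e hmul).exists_equiv_map_single
  exact ⟨σ, fun x => by rw [pointClass, pointClass, ← hσ, degZeroEquiv_degZeroRingEquiv]⟩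

lemma MCoDelta_one_apply (φ : MCo M 1 ℓ) (s : MSimplex M 2 ℓ) :
    MCoDelta M 1 ℓ φ s = -(if h : M.FaceOK s 0 then φ (M.face s 0 h) else 0) := by
  simp only [MCoDelta, LinearMap.coe_mk, AddHom.coe_mk, Fin.sum_univ_one]
  split <;> simp

lemma mem_MCocycle_one_iff (φ : MCo M 1 ℓ) :
    φ ∈ MCocycle M 1 ℓ ↔
      ∀ s : MSimplex M 1 ℓ, M.HasInteriorPoint (s.pts 0) (s.pts 1) → φ s = 0 := by
  rw [MCocycle, LinearMap.mem_ker, funext_iff]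
  simp only [MCoDelta_one_apply, Pi.zero_apply, neg_eq_zero, dite_eq_right_iff]
  constructor
  · rintro H s ⟨a, hax, hay, hsplit⟩
    let t : MSimplex M 2 ℓ := ⟨![s.pts 0, a, s.pts 1],
      fun i => by fin_cases i <;> simp [hax.symm, hay],
      by simp [GMS.len, Fin.sum_univ_two, ← hsplit, ← s.len_eq]⟩
    have hface : M.FaceOK t 0 := ⟨hsplit, by simpa [t, SepTuple, faceTuple] using s.sep 0,
      by simpa [t, faceTuple, GMS.len] using s.len_eq⟩
    have ht : M.face t 0 hface = s := by
      ext i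
      fin_cases i <;> rfl
    exact ht ▸ H t hface
  · intro H t hface
    exact H _ ⟨t.pts 1, (t.sep 0).symm, t.sep 1, hface.1⟩

lemma exists_mem_MCocycle_one_ne_zero_iff (s : MSimplex M 1 ℓ) :
    (∃ φ ∈ MCocycle M 1 ℓ, φ s ≠ 0) ↔ ¬ M.HasInteriorPoint (s.pts 0) (s.pts 1) := by
  refine ⟨fun ⟨φ, hφ, hs⟩ h => hs ((mem_MCocycle_one_iff φ).1 hφ s h), fun h => ?_⟩
  refine ⟨Pi.single s 1, (mem_MCocycle_one_iff _).2 fun t ht => ?_, by simp⟩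
  exact Pi.single_eq_of_ne (fun hts => h (by subst hts; exact ht)) _

lemma exists_MSimplex_one_iff (x y : X) :
    (∃ s : MSimplex M 1 ℓ, s.pts 0 = x ∧ s.pts 1 = y) ↔ x ≠ y ∧ M.d x y = ℓ := by
  constructor
  · rintro ⟨s, rfl, rfl⟩
    exact ⟨s.sep 0, by simpa [GMS.len] using s.len_eq⟩
  · rintro ⟨hxy, hd⟩
    exact ⟨⟨![x, y], fun i => by fin_cases i; simpa using hxy, by simpa [GMS.len] using hd⟩,
      rfl, rfl⟩

lemma MCup_pointCochain_left (g : X → ℤ) (φ : MCo M 1 ℓ) (s : MSimplex M (0 + 1) (0 + ℓ)) :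
    MCup M (pointCochain M 0 g) φ s = g (s.pts 0) * φ (s.castLen (zero_add ℓ)) := by
  have hback : backT 0 1 s.pts = s.pts := funext fun i => congrArg s.pts (Fin.ext (zero_add _))
  unfold MCup
  rw [dif_pos ⟨by simp [GMS.len], by rw [hback, s.len_eq, zero_add]⟩]
  exact congrArg _ (congrArg φ (MSimplex.ext hback))

lemma MCup_pointCochain_right (φ : MCo M 1 ℓ) (h : X → ℤ)
    (s : MSimplex M (1 + 0) (ℓ + 0)) :
    MCup M φ (pointCochain M 0 h) s = φ (s.castLen (add_zero ℓ)) * h (s.pts 1) := by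
  unfold MCup
  rw [dif_pos ⟨s.len_eq.trans (by rw [add_zero]), by simp [GMS.len]⟩]
  rfl

lemma MCup_pointCochain_left_mem (g : X → ℤ) {φ : MCo M 1 ℓ}
    (hφ : φ ∈ MCocycle M 1 ℓ) :
    MCup M (pointCochain M 0 g) φ ∈ MCocycle M 1 (0 + ℓ) := by
  rw [mem_MCocycle_one_iff] at hφ ⊢
  intro s hs
  rw [MCup_pointCochain_left, hφ _ hs, mul_zero]

lemma MCup_pointCochain_right_mem {φ : MCo M 1 ℓ} (hφ : φ ∈ MCocycle M 1 ℓ)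
    (h : X → ℤ) :
    MCup M φ (pointCochain M 0 h) ∈ MCocycle M 1 (ℓ + 0) := by
  rw [mem_MCocycle_one_iff] at hφ ⊢
  intro s hs
  rw [MCup_pointCochain_right, hφ _ hs, zero_mul]

lemma MHmul_MHmul_degZeroEquiv_eq_zero_iff (g h : X → ℤ) (α : MagCohomology M 1 ℓ) :
    MHmul M (MHmul M (degZeroEquiv M g) α) (degZeroEquiv M h) = 0 ↔
      ∀ s : MSimplex M 1 ℓ, g (s.pts 0) * MHout M α s * h (s.pts 1) = 0 := by
  have hleft := MCup_pointCochain_left_mem g (MHout_mem α)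
  have hprod : MHmul M (MHmul M (degZeroEquiv M g) α) (degZeroEquiv M h) =
      cohClass M (MCup M (MCup M (pointCochain M 0 g) (MHout M α)) (pointCochain M 0 h)) := by
    simp only [MHmul, MHout_degZeroEquiv, MHout_cohClass MCobound_one hleft]
  rw [hprod, cohClass_eq_zero_iff MCobound_one (MCup_pointCochain_right_mem hleft h), funext_iff]
  simp only [Pi.zero_apply, MCup_pointCochain_right, MCup_pointCochain_left, mul_assoc]
  exact ⟨fun H s => H (s.castLen (by simp)), fun H s => H (s.castLen (by simp))⟩

lemma pointClass_mul_mul_ne_zero_iff (x y : X) (α : MagCohomology M 1 ℓ) :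
    MHmul M (MHmul M (pointClass M x) α) (pointClass M y) ≠ 0 ↔
      ∃ s : MSimplex M 1 ℓ, s.pts 0 = x ∧ s.pts 1 = y ∧ MHout M α s ≠ 0 := by
  rw [pointClass, pointClass, Ne, MHmul_MHmul_degZeroEquiv_eq_zero_iff]
  simp only [Pi.single_apply, not_forall]
  exact exists_congr fun s => by split_ifs <;> simp_all

theorem exists_pointClass_mul_mul_ne_zero_iff (hq : M.Quasi) (x y : X) :
    (∃ α : MagCohomology M 1 ℓ,
        MHmul M (MHmul M (pointClass M x) α) (pointClass M y) ≠ 0) ↔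
      M.Adjacent x y ∧ M.d x y = ℓ := by
  simp only [pointClass_mul_mul_ne_zero_iff, GMS.adjacent_iff hq]
  constructor
  · rintro ⟨α, s, rfl, rfl, hs⟩
    obtain ⟨hxy, hd⟩ := (exists_MSimplex_one_iff _ _).1 ⟨s, rfl, rfl⟩
    exact ⟨⟨hxy, hd ▸ ENNReal.coe_ne_top,
      (exists_mem_MCocycle_one_ne_zero_iff s).1 ⟨_, MHout_mem α, hs⟩⟩, hd⟩
  · rintro ⟨⟨hxy, -, hno⟩, hd⟩
    obtain ⟨s, rfl, rfl⟩ := (exists_MSimplex_one_iff x y).2 ⟨hxy, hd⟩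
    obtain ⟨φ, hφ, hs⟩ := (exists_mem_MCocycle_one_ne_zero_iff s).2 hno
    exact ⟨cohClass M φ, s, rfl, rfl, by rwa [MHout_cohClass MCobound_one hφ]⟩

theorem adjacent_iff_of_map_pointClass (hq : M.Quasi) (hq' : M'.Quasi)
    (e : ∀ (k : ℕ) (ℓ : ℝ≥0), MagCohomology M k ℓ ≃+ MagCohomology M' k ℓ)
    (hmul : PreservesMHmul e)
    (σ : X ≃ Y) (hσ : ∀ x, e 0 0 (pointClass M x) = pointClass M' (σ x))
    (x y : X) (ℓ : ℝ≥0) :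
    M.Adjacent x y ∧ M.d x y = ℓ ↔
      M'.Adjacent (σ x) (σ y) ∧ M'.d (σ x) (σ y) = ℓ := by
  rw [← exists_pointClass_mul_mul_ne_zero_iff hq, ← exists_pointClass_mul_mul_ne_zero_iff hq',
    (e 1 ℓ).surjective.exists]
  refine exists_congr fun α => ?_
  rw [← hσ, ← hσ, ← hmul, ← hmul, EmbeddingLike.map_ne_zero_iff]

end Cohomology

theorem recovery_theorem_general {X Y : Type*} (M : GMS X) (M' : GMS Y)
    (hpos : 0 < ⨅ (a : X) (b : X) (_ : a ≠ b), M.d a b)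
    (hpos' : 0 < ⨅ (a : Y) (b : Y) (_ : a ≠ b), M'.d a b)
    (hiso : MHRingIso M M') :
    ∃ f : X → Y, Function.Bijective f ∧ ∀ a b : X, M'.d (f a) (f b) = M.d a b := by
  obtain ⟨e, -, hmul⟩ := hiso
  obtain ⟨σ, hσ⟩ := exists_equiv_map_pointClass e hmul
  have hadj := adjacent_iff_of_map_pointClass (GMS.quasi_of_iInf_pos hpos)
    (GMS.quasi_of_iInf_pos hpos') e hmul σ hσ
  exact ⟨σ, σ.bijective, GMS.d_equiv_eq_of_adjacent_iff hpos hpos' σ hadj⟩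

/-- **Recovery theorem.** If `X` and `X'` are extended quasi-metric spaces in
which the infimum of distances between distinct points is strictly positive,
and their magnitude cohomology rings are isomorphic as bigraded associative
unital rings, then `X` and `X'` are isometric. -/
theorem recovery_theorem {X Y : Type*} (M : GMS X) (M' : GMS Y)
    (hq : M.Quasi) (hq' : M'.Quasi)
    (hpos : 0 < ⨅ (a : X) (b : X) (_ : a ≠ b), M.d a b)
    (hpos' : 0 < ⨅ (a : Y) (b : Y) (_ : a ≠ b), M'.d a b)
    (hiso : MHRingIso M M') :
    ∃ f : X → Y, Function.Bijective f ∧ ∀ a b : X, M'.d (f a) (f b) = M.d a b :=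
  recovery_theorem_general M M' hpos hpos' hiso

end
end

section
/- Let X be an extended quasi-metric space for which the infimum of the distances d(a,b) over pairs of distinct points a ≠ b is strictly positive. Then for any distinct a, b ∈ X, the distance d(a,b) equals the minimum of the set A_{a,b} = { d(x_0,x_1) + … + d(x_{k−1},x_k) : a = x_0, b = x_k, and x_{i−1}, x_i are adjacent for i = 1,…,k } when this set is nonempty, and d(a,b) = ∞ when A_{a,b} is empty. -/
/-! Core definitions: magnitude (co)homology of generalised metric spaces. -/

open scoped ENNReal NNReal Classical
noncomputable section

variable {X : Type*}

/-- The set `A_{a,b}` of lengths of chains from `a` to `b` whose consecutive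
entries are adjacent. -/
def Achain (M : GMS X) (a b : X) : Set ℝ≥0∞ :=
  {c | ∃ (k : ℕ) (x : Fin (k + 1) → X), x 0 = a ∧ x (Fin.last k) = b ∧
    (∀ i : Fin k, M.Adjacent (x i.castSucc) (x i.succ)) ∧ c = M.len x}

namespace GMS

variable {M : GMS X}

lemma len_succ {k : ℕ} (x : Fin (k + 2) → X) :
    M.len x = M.d (x 0) (x 1) + M.len (Fin.tail x) := by
  simp only [GMS.len, Fin.sum_univ_succ, Fin.tail, Fin.succ_castSucc]
  rfl

lemma d_le_len : ∀ {k : ℕ} (x : Fin (k + 1) → X), M.d (x 0) (x (Fin.last k)) ≤ M.len x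
  | 0, x => by simp [GMS.len, M.d_self]
  | k + 1, x =>
    calc M.d (x 0) (x (Fin.last (k + 1)))
        ≤ M.d (x 0) (x 1) + M.d (Fin.tail x 0) (Fin.tail x (Fin.last k)) :=
          M.d_triangle _ _ _
      _ ≤ M.d (x 0) (x 1) + M.len (Fin.tail x) := by gcongr; exact d_le_len _
      _ = M.len x := (len_succ x).symm

lemma d_le_of_mem_achain {a b : X} {u : ℝ≥0∞} (hu : u ∈ Achain M a b) : M.d a b ≤ u := by
  obtain ⟨k, x, rfl, rfl, -, rfl⟩ := hu
  exact d_le_len x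

lemma ne_top_of_mem_achain {a b : X} {u : ℝ≥0∞} (hu : u ∈ Achain M a b) : u ≠ ∞ := by
  obtain ⟨k, x, -, -, hadj, rfl⟩ := hu
  exact ENNReal.sum_ne_top.mpr fun i _ => (hadj i).2.1

lemma zero_mem_achain (a : X) : 0 ∈ Achain M a a :=
  ⟨0, fun _ => a, rfl, rfl, fun i => i.elim0, by simp [GMS.len]⟩

lemma add_mem_achain_of_adjacent {a c b : X} {u : ℝ≥0∞} (hac : M.Adjacent a c)
    (hu : u ∈ Achain M c b) : M.d a c + u ∈ Achain M a b := by
  obtain ⟨k, y, rfl, rfl, hadj, rfl⟩ := hu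
  refine ⟨k + 1, Fin.cons a y, rfl, by simp [← Fin.succ_last], fun i => ?_, ?_⟩
  · cases i using Fin.cases with
    | zero => simpa using hac
    | succ i => simpa [← Fin.succ_castSucc] using hadj i
  · simp [len_succ (Fin.cons a y : Fin (k + 2) → X)]

lemma d_mem_achain_of_adjacent {a b : X} (hab : M.Adjacent a b) : M.d a b ∈ Achain M a b := by
  simpa using add_mem_achain_of_adjacent hab (zero_mem_achain b)

lemma add_mem_achain {a c b : X} {u v : ℝ≥0∞} (hu : u ∈ Achain M a c)
    (hv : v ∈ Achain M c b) : u + v ∈ Achain M a b := by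
  obtain ⟨k, x, rfl, rfl, hadj, rfl⟩ := hu
  induction k with
  | zero => simpa [GMS.len] using hv
  | succ k ih =>
    have htail := ih (Fin.tail x) hv fun i => hadj i.succ
    rw [len_succ, add_assoc (M.d _ _)]
    exact add_mem_achain_of_adjacent (hadj 0) htail

lemma exists_between_of_not_adjacent {a b : X} (h0 : M.d a b ≠ 0) (htop : M.d a b ≠ ∞)
    (hab : ¬ M.Adjacent a b) : ∃ c, c ≠ a ∧ c ≠ b ∧ M.d a b = M.d a c + M.d c b := by
  simp only [GMS.Adjacent, not_and, not_forall, not_or] at hab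
  obtain ⟨c, hc, hca, hcb⟩ := hab h0 htop
  exact ⟨c, hca, hcb, hc⟩

/-- Splitting at a point strictly between `a` and `b` leaves two pieces each shorter by at least
`ε`, so `n` bounds the number of splits needed to reach adjacent pairs. -/
lemma d_mem_achain_of_le_mul (hq : M.Quasi) {ε : ℝ≥0∞} (hε : ε ≠ ∞)
    (hsep : ∀ x y, x ≠ y → ε ≤ M.d x y) :
    ∀ (n : ℕ) (a b : X), M.d a b ≤ n * ε → M.d a b ∈ Achain M a b := by
  intro n
  induction n with
  | zero =>
    intro a b h
    obtain rfl : a = b := hq a b (by simpa using h)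
    simpa [M.d_self] using zero_mem_achain a
  | succ n ih =>
    intro a b h
    by_cases hab : a = b
    · subst hab
      simpa [M.d_self] using zero_mem_achain a
    by_cases hadj : M.Adjacent a b
    · exact d_mem_achain_of_adjacent hadj
    have htop : M.d a b ≠ ∞ := ne_top_of_le_ne_top (by finiteness) h
    obtain ⟨c, hca, hcb, hsplit⟩ :=
      exists_between_of_not_adjacent (fun h0 => hab (hq a b h0)) htop hadj
    have h' : M.d a c + M.d c b ≤ n * ε + ε := by rw [← hsplit]; simpa [add_mul] using h
    have hac : M.d a c ≤ n * ε := ENNReal.le_of_add_le_add_right hε <|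
      (add_le_add_right (hsep c b hcb) _).trans h'
    have hcb' : M.d c b ≤ n * ε := ENNReal.le_of_add_le_add_left hε <|
      (add_le_add_left (hsep a c (Ne.symm hca)) _).trans (h'.trans_eq (add_comm _ _))
    rw [hsplit]
    exact add_mem_achain (ih a c hac) (ih c b hcb')

lemma exists_sep_of_iInf_pos (hpos : 0 < ⨅ (a : X) (b : X) (_ : a ≠ b), M.d a b) :
    ∃ ε ≠ 0, ε ≠ ∞ ∧ ∀ x y, x ≠ y → ε ≤ M.d x y :=
  ⟨min (⨅ (a : X) (b : X) (_ : a ≠ b), M.d a b) 1, (lt_min hpos one_pos).ne',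
    ne_top_of_le_ne_top ENNReal.one_ne_top (min_le_right _ _),
    fun x y hxy => (min_le_left _ _).trans (iInf₂_le_of_le x y (iInf_le _ hxy))⟩

lemma d_mem_achain_of_ne_top (hq : M.Quasi)
    (hpos : 0 < ⨅ (a : X) (b : X) (_ : a ≠ b), M.d a b) {a b : X} (htop : M.d a b ≠ ∞) :
    M.d a b ∈ Achain M a b := by
  obtain ⟨ε, hε0, hεtop, hsep⟩ := exists_sep_of_iInf_pos hpos
  obtain ⟨n, hn⟩ := ENNReal.exists_nat_mul_gt hε0 htop
  exact d_mem_achain_of_le_mul hq hεtop hsep n a b hn.le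

end GMS

theorem dist_eq_min_adjacent_chains_general (M : GMS X) (hq : M.Quasi)
    (hpos : 0 < ⨅ (a : X) (b : X) (_ : a ≠ b), M.d a b)
    (a b : X) :
    ((Achain M a b).Nonempty → IsLeast (Achain M a b) (M.d a b)) ∧
    (¬ (Achain M a b).Nonempty → M.d a b = ∞) := by
  refine ⟨fun ⟨u, hu⟩ => ⟨?_, fun v hv => M.d_le_of_mem_achain hv⟩, fun hne => ?_⟩
  · exact M.d_mem_achain_of_ne_top hq hpos <|
      ne_top_of_le_ne_top (M.ne_top_of_mem_achain hu) (M.d_le_of_mem_achain hu)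
  · by_contra htop
    exact hne ⟨_, M.d_mem_achain_of_ne_top hq hpos htop⟩

/-- If `X` is an extended quasi-metric space in which the infimum of the
distances between distinct points is strictly positive, then for distinct
`a, b` the distance `d(a,b)` is the minimum of `A_{a,b}` when that set is
nonempty, and `d(a,b) = ∞` when it is empty. -/
theorem dist_eq_min_adjacent_chains (M : GMS X) (hq : M.Quasi)
    (hpos : 0 < ⨅ (a : X) (b : X) (_ : a ≠ b), M.d a b)
    (a b : X) (hab : a ≠ b) :
    ((Achain M a b).Nonempty → IsLeast (Achain M a b) (M.d a b)) ∧
    (¬ (Achain M a b).Nonempty → M.d a b = ∞) :=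
  dist_eq_min_adjacent_chains_general M hq hpos a b

end
end

section
/- Let X be a generalised metric space. The product on magnitude cochains is strictly associative, the cochain u ∈ MC^0_0(X) is a two-sided unit for it, and it satisfies the Leibniz rule: for φ ∈ MC^{j}_{ℓ}(X) and ψ ∈ MC^{k}_{m}(X), ∂*(φ·ψ) = (∂*φ)·ψ + (−1)^{j} φ·(∂*ψ). -/
/-! Core definitions: magnitude (co)homology of generalised metric spaces. -/

open scoped ENNReal NNReal Classical
noncomputable section

variable {X : Type*}

/-! ### Auxiliary lemmas -/

lemma msimplex_ext {M : GMS X} {k : ℕ} {ℓ : ℝ≥0} {s t : MSimplex M k ℓ}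
    (h : s.pts = t.pts) : s = t := by
  cases s; cases t; cases h; rfl

lemma mco_congr {M : GMS X} {k : ℕ} {ℓ : ℝ≥0} (φ : MCo M k ℓ) {s t : MSimplex M k ℓ}
    (h : s.pts = t.pts) : φ s = φ t := congrArg φ (msimplex_ext h)

/-- Reindexing a simplex along equalities of bidegrees. -/
def reindexS {M : GMS X} {k k' : ℕ} {ℓ ℓ' : ℝ≥0} (hk : k = k') (hl : ℓ = ℓ')
    (s : MSimplex M k ℓ) : MSimplex M k' ℓ' := by subst hk; subst hl; exact s

lemma MCoCast_apply {M : GMS X} {k k' : ℕ} {ℓ ℓ' : ℝ≥0} (hk : k = k') (hl : ℓ = ℓ')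
    (φ : MCo M k ℓ) (s : MSimplex M k' ℓ') :
    MCoCast M hk hl φ s = φ (reindexS hk.symm hl.symm s) := by
  subst hk; subst hl; rfl

lemma reindexS_pts {M : GMS X} {k k' : ℕ} {ℓ ℓ' : ℝ≥0} (hk : k = k') (hl : ℓ = ℓ')
    (s : MSimplex M k ℓ) (p : Fin (k' + 1)) :
    (reindexS hk hl s).pts p = s.pts ⟨p.val, by omega⟩ := by
  subst hk; subst hl; rfl

lemma faceTuple_apply {k : ℕ} (x : Fin (k + 2) → X) (i : Fin k) (p : Fin (k + 1)) :
    faceTuple x i p =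
      if p.val < i.val + 1 then x ⟨p.val, by omega⟩ else x ⟨p.val + 1, by omega⟩ := by
  by_cases h : p.val < i.val + 1
  · rw [if_pos h]
    show x (Fin.succAbove _ p) = _
    rw [Fin.succAbove_of_castSucc_lt _ p (by simp only [Fin.lt_def, Fin.coe_castSucc]; omega)]
    rfl
  · rw [if_neg h]
    show x (Fin.succAbove _ p) = _
    rw [Fin.succAbove_of_le_castSucc _ p (by simp only [Fin.le_def, Fin.coe_castSucc]; omega)]
    rfl

lemma GMS.len_split (M : GMS X) (j k : ℕ) (x : Fin (j + k + 1) → X) :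
    M.len x = M.len (frontT j k x) + M.len (backT j k x) := by
  rw [GMS.len, Fin.sum_univ_add]
  rfl

set_option maxHeartbeats 2000000 in
lemma GMS.len_faceTuple (M : GMS X) {k : ℕ} (x : Fin (k + 2) → X) (i : Fin k)
    (geo : M.d (x ⟨i.val, by omega⟩) (x ⟨i.val + 2, by omega⟩) =
      M.d (x ⟨i.val, by omega⟩) (x ⟨i.val + 1, by omega⟩) +
        M.d (x ⟨i.val + 1, by omega⟩) (x ⟨i.val + 2, by omega⟩)) :
    M.len (faceTuple x i) = M.len x := by
  have key : ∀ p : Fin k,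
      M.d (faceTuple x i p.castSucc) (faceTuple x i p.succ) =
        M.d (x (((⟨i.val + 1, by omega⟩ : Fin (k + 1)).succAbove p).castSucc))
            (x (((⟨i.val + 1, by omega⟩ : Fin (k + 1)).succAbove p).succ)) +
          (if p = i then M.d (x ⟨i.val + 1, by omega⟩) (x ⟨i.val + 2, by omega⟩) else 0) := by
    intro p
    have hs : ((⟨i.val + 1, by omega⟩ : Fin (k + 1)).succAbove p) =
        if p.val < i.val + 1 then (⟨p.val, by omega⟩ : Fin (k + 1))
          else ⟨p.val + 1, by omega⟩ := by
      by_cases h : p.val < i.val + 1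
      · rw [if_pos h, Fin.succAbove_of_castSucc_lt _ p
          (by simp only [Fin.lt_def, Fin.coe_castSucc]; omega)]
        rfl
      · rw [if_neg h, Fin.succAbove_of_le_castSucc _ p
          (by simp only [Fin.le_def, Fin.coe_castSucc]; omega)]
        rfl
    have hcs : (faceTuple x i p.castSucc) =
        if p.val < i.val + 1 then x ⟨p.val, by omega⟩ else x ⟨p.val + 1, by omega⟩ := by
      rw [faceTuple_apply]; rfl
    have hsu : (faceTuple x i p.succ) =
        if p.val + 1 < i.val + 1 then x ⟨p.val + 1, by omega⟩ else x ⟨p.val + 2, by omega⟩ := by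
      rw [faceTuple_apply]; rfl
    rcases Nat.lt_trichotomy p.val i.val with h | h | h
    · have e1 : faceTuple x i p.castSucc = x ⟨p.val, by omega⟩ := by
        rw [hcs, if_pos (show p.val < i.val + 1 by omega)]
      have e2 : faceTuple x i p.succ = x ⟨p.val + 1, by omega⟩ := by
        rw [hsu, if_pos (show p.val + 1 < i.val + 1 by omega)]
      have e3 : ((⟨i.val + 1, by omega⟩ : Fin (k + 1)).succAbove p) =
          ⟨p.val, by omega⟩ := by
        rw [hs, if_pos (show p.val < i.val + 1 by omega)]
      rw [e1, e2, e3,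
        if_neg (show ¬ p = i from fun hpi => by
          rw [Fin.ext_iff] at hpi; omega)]
      exact (add_zero _).symm
    · have hp : p = i := Fin.ext h
      subst hp
      have e1 : faceTuple x p p.castSucc = x ⟨p.val, by omega⟩ := by
        rw [hcs, if_pos (show p.val < p.val + 1 by omega)]
      have e2 : faceTuple x p p.succ = x ⟨p.val + 2, by omega⟩ := by
        rw [hsu, if_neg (show ¬ (p.val + 1 < p.val + 1) by omega)]
      have e3 : ((⟨p.val + 1, by omega⟩ : Fin (k + 1)).succAbove p) =
          ⟨p.val, by omega⟩ := by
        rw [hs, if_pos (show p.val < p.val + 1 by omega)]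
      rw [e1, e2, e3, if_pos rfl]
      exact geo
    · have e1 : faceTuple x i p.castSucc = x ⟨p.val + 1, by omega⟩ := by
        rw [hcs, if_neg (show ¬ (p.val < i.val + 1) by omega)]
      have e2 : faceTuple x i p.succ = x ⟨p.val + 2, by omega⟩ := by
        rw [hsu, if_neg (show ¬ (p.val + 1 < i.val + 1) by omega)]
      have e3 : ((⟨i.val + 1, by omega⟩ : Fin (k + 1)).succAbove p) =
          ⟨p.val + 1, by omega⟩ := by
        rw [hs, if_neg (show ¬ (p.val < i.val + 1) by omega)]
      rw [e1, e2, e3,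
        if_neg (show ¬ p = i from fun hpi => by
          rw [Fin.ext_iff] at hpi; omega)]
      exact (add_zero _).symm
  rw [GMS.len, GMS.len,
    Fin.sum_univ_succAbove (fun q : Fin (k + 1) => M.d (x q.castSucc) (x q.succ))
      ⟨i.val + 1, by omega⟩]
  rw [Finset.sum_congr rfl fun p _ => key p, Finset.sum_add_distrib,
    Finset.sum_ite_eq' Finset.univ i
      (fun _ => M.d (x ⟨i.val + 1, by omega⟩) (x ⟨i.val + 2, by omega⟩)),
    if_pos (Finset.mem_univ i)]
  rw [add_comm]
  rfl

lemma MCoDelta_apply (M : GMS X) (k : ℕ) (ℓ : ℝ≥0) (φ : MCo M k ℓ)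
    (s : MSimplex M (k + 1) ℓ) :
    MCoDelta M k ℓ φ s = ∑ i : Fin k, (-1 : ℤ) ^ (i.val + 1) *
      (if h : M.FaceOK s i then φ (M.face s i h) else 0) := rfl

lemma MCup_apply (M : GMS X) {j k : ℕ} {ℓ m : ℝ≥0} (φ : MCo M j ℓ) (ψ : MCo M k m)
    (s : MSimplex M (j + k) (ℓ + m)) (h1 : M.len (frontT j k s.pts) = (ℓ : ℝ≥0∞))
    (h2 : M.len (backT j k s.pts) = (m : ℝ≥0∞)) :
    MCup M φ ψ s = φ ⟨frontT j k s.pts, s.sep.front, h1⟩ *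
      ψ ⟨backT j k s.pts, s.sep.back, h2⟩ := dif_pos ⟨h1, h2⟩

lemma MCup_eq_zero (M : GMS X) {j k : ℕ} {ℓ m : ℝ≥0} (φ : MCo M j ℓ) (ψ : MCo M k m)
    (s : MSimplex M (j + k) (ℓ + m))
    (h : ¬(M.len (frontT j k s.pts) = (ℓ : ℝ≥0∞) ∧ M.len (backT j k s.pts) = (m : ℝ≥0∞))) :
    MCup M φ ψ s = 0 := dif_neg h

set_option maxHeartbeats 3200000 in
/-- For a generalised metric space `X`, the product of magnitude cochains is
strictly associative and unital with unit `u`, and satisfies the Leibniz rule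
`∂*(φ·ψ) = (∂*φ)·ψ + (-1)^j φ·(∂*ψ)`. -/
theorem cochain_product_assoc_unital_leibniz (M : GMS X) :
    (∀ (j k l : ℕ) (a b c : ℝ≥0) (φ : MCo M j a) (ψ : MCo M k b) (χ : MCo M l c),
      MCoCast M (add_assoc j k l) (add_assoc a b c) (MCup M (MCup M φ ψ) χ) =
        MCup M φ (MCup M ψ χ)) ∧
    (∀ (k : ℕ) (b : ℝ≥0) (ψ : MCo M k b),
      MCup M (MCoUnit M) ψ = MCoCast M (zero_add k).symm (zero_add b).symm ψ) ∧
    (∀ (j : ℕ) (a : ℝ≥0) (φ : MCo M j a),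
      MCup M φ (MCoUnit M) = MCoCast M (add_zero j).symm (add_zero a).symm φ) ∧
    (∀ (j k : ℕ) (a b : ℝ≥0) (φ : MCo M j a) (ψ : MCo M k b),
      MCoDelta M (j + k) (a + b) (MCup M φ ψ) =
        MCoCast M (by omega) rfl (MCup M (MCoDelta M j a φ) ψ) +
          ((-1 : ℤ) ^ j) • MCup M φ (MCoDelta M k b ψ)) := by
  refine ⟨?_, ?_, ?_, ?_⟩
  · -- associativity
    intro j k l a b c φ ψ χ
    funext s
    rw [MCoCast_apply]
    set t := reindexS (add_assoc j k l).symm (add_assoc a b c).symm s with htdef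
    have hT : ∀ p : Fin (j + k + l + 1), t.pts p = s.pts ⟨p.val, by have := p.isLt; omega⟩ :=
      fun p => reindexS_pts _ _ _ _
    have e1 : frontT j k (frontT (j + k) l t.pts) = frontT j (k + l) s.pts := by
      funext p
      rw [show frontT j k (frontT (j + k) l t.pts) p = t.pts ⟨p.val, by have := p.isLt; omega⟩
        from rfl, hT]
      rfl
    have e2 : backT j k (frontT (j + k) l t.pts) = frontT k l (backT j (k + l) s.pts) := by
      funext p
      rw [show backT j k (frontT (j + k) l t.pts) p = t.pts ⟨j + p.val, by have := p.isLt; omega⟩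
        from rfl, hT]
      rfl
    have e3 : backT (j + k) l t.pts = backT k l (backT j (k + l) s.pts) := by
      funext p
      rw [show backT (j + k) l t.pts p = t.pts ⟨j + k + p.val, by have := p.isLt; omega⟩
        from rfl, hT,
        show backT k l (backT j (k + l) s.pts) p = s.pts ⟨j + (k + p.val), by have := p.isLt; omega⟩
        from rfl]
      exact congrArg s.pts (by simp only [Fin.mk.injEq]; omega)
    have hs1 : M.len (frontT (j + k) l t.pts) =
        M.len (frontT j (k + l) s.pts) + M.len (frontT k l (backT j (k + l) s.pts)) := by
      rw [M.len_split j k (frontT (j + k) l t.pts), e1, e2]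
    have hs2 : M.len (backT j (k + l) s.pts) =
        M.len (frontT k l (backT j (k + l) s.pts)) + M.len (backT k l (backT j (k + l) s.pts)) :=
      M.len_split k l _
    by_cases h : M.len (frontT j (k + l) s.pts) = (a : ℝ≥0∞) ∧
        M.len (frontT k l (backT j (k + l) s.pts)) = (b : ℝ≥0∞) ∧
        M.len (backT k l (backT j (k + l) s.pts)) = (c : ℝ≥0∞)
    · obtain ⟨h1, h2, h3⟩ := h
      have hab : M.len (frontT (j + k) l t.pts) = ((a + b : ℝ≥0) : ℝ≥0∞) := by
        rw [hs1, h1, h2]; push_cast; rfl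
      have hc : M.len (backT (j + k) l t.pts) = (c : ℝ≥0∞) := by rw [e3]; exact h3
      have hbc : M.len (backT j (k + l) s.pts) = ((b + c : ℝ≥0) : ℝ≥0∞) := by
        rw [hs2, h2, h3]; push_cast; rfl
      rw [MCup_apply M (MCup M φ ψ) χ t hab hc, MCup_apply M φ (MCup M ψ χ) s h1 hbc,
        MCup_apply M φ ψ
          (⟨frontT (j + k) l t.pts, t.sep.front, hab⟩ : MSimplex M (j + k) (a + b))
          (show M.len (frontT j k (frontT (j + k) l t.pts)) = (a : ℝ≥0∞) by rw [e1]; exact h1)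
          (show M.len (backT j k (frontT (j + k) l t.pts)) = (b : ℝ≥0∞) by rw [e2]; exact h2),
        MCup_apply M ψ χ
          (⟨backT j (k + l) s.pts, s.sep.back, hbc⟩ : MSimplex M (k + l) (b + c))
          (show M.len (frontT k l (backT j (k + l) s.pts)) = (b : ℝ≥0∞) from h2)
          (show M.len (backT k l (backT j (k + l) s.pts)) = (c : ℝ≥0∞) from h3),
        mul_assoc]
      exact congrArg₂ (· * ·) (mco_congr φ e1)
        (congrArg₂ (· * ·) (mco_congr ψ e2) (mco_congr χ e3))
    · have hL : MCup M (MCup M φ ψ) χ t = 0 := by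
        by_cases hr : M.len (frontT (j + k) l t.pts) = ((a + b : ℝ≥0) : ℝ≥0∞) ∧
            M.len (backT (j + k) l t.pts) = (c : ℝ≥0∞)
        · rw [MCup_apply M (MCup M φ ψ) χ t hr.1 hr.2]
          have hz : MCup M φ ψ
              (⟨frontT (j + k) l t.pts, t.sep.front, hr.1⟩ : MSimplex M (j + k) (a + b)) = 0 := by
            apply MCup_eq_zero
            intro hq
            have hq1 : M.len (frontT j k (frontT (j + k) l t.pts)) = (a : ℝ≥0∞) := hq.1
            have hq2 : M.len (backT j k (frontT (j + k) l t.pts)) = (b : ℝ≥0∞) := hq.2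
            rw [e1] at hq1
            rw [e2] at hq2
            have hq3 : M.len (backT k l (backT j (k + l) s.pts)) = (c : ℝ≥0∞) := by
              rw [← e3]; exact hr.2
            exact h ⟨hq1, hq2, hq3⟩
          rw [hz, zero_mul]
        · exact MCup_eq_zero M _ _ t hr
      have hR : MCup M φ (MCup M ψ χ) s = 0 := by
        by_cases hr : M.len (frontT j (k + l) s.pts) = (a : ℝ≥0∞) ∧
            M.len (backT j (k + l) s.pts) = ((b + c : ℝ≥0) : ℝ≥0∞)
        · rw [MCup_apply M φ (MCup M ψ χ) s hr.1 hr.2]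
          have hz : MCup M ψ χ
              (⟨backT j (k + l) s.pts, s.sep.back, hr.2⟩ : MSimplex M (k + l) (b + c)) = 0 := by
            apply MCup_eq_zero
            intro hq
            exact h ⟨hr.1, hq.1, hq.2⟩
          rw [hz, mul_zero]
        · exact MCup_eq_zero M _ _ s hr
      rw [hL, hR]
  · -- left unit
    intro k b ψ
    funext s
    rw [MCoCast_apply]
    have h0 : M.len (frontT 0 k s.pts) = ((0 : ℝ≥0) : ℝ≥0∞) := by
      simp [GMS.len]
    have hb : M.len (backT 0 k s.pts) = ((b : ℝ≥0) : ℝ≥0∞) := by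
      have hsp := M.len_split 0 k s.pts
      rw [s.len_eq, h0] at hsp
      simpa using hsp.symm
    rw [MCup_apply M (MCoUnit M) ψ s h0 hb,
      show MCoUnit M ⟨frontT 0 k s.pts, s.sep.front, h0⟩ = 1 from rfl, one_mul]
    refine mco_congr ψ (funext fun p => ?_)
    show backT 0 k s.pts p = _
    rw [show backT 0 k s.pts p = s.pts ⟨0 + p.val, by have := p.isLt; omega⟩ from rfl,
      reindexS_pts]
    exact congrArg s.pts (by simp only [Fin.mk.injEq]; omega)
  · -- right unit
    intro j a φ
    funext s
    rw [MCoCast_apply]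
    have h0 : M.len (backT j 0 s.pts) = ((0 : ℝ≥0) : ℝ≥0∞) := by
      simp [GMS.len]
    have ha : M.len (frontT j 0 s.pts) = ((a : ℝ≥0) : ℝ≥0∞) := by
      have hsp := M.len_split j 0 s.pts
      rw [s.len_eq, h0] at hsp
      simpa using hsp.symm
    rw [MCup_apply M φ (MCoUnit M) s ha h0,
      show MCoUnit M ⟨backT j 0 s.pts, s.sep.back, h0⟩ = 1 from rfl, mul_one]
    refine mco_congr φ (funext fun p => ?_)
    show frontT j 0 s.pts p = _
    rw [show frontT j 0 s.pts p = s.pts ⟨p.val, by have := p.isLt; omega⟩ from rfl,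
      reindexS_pts]
  · -- Leibniz rule
    intro j k a b φ ψ
    funext s
    rw [Pi.add_apply, Pi.smul_apply, smul_eq_mul, MCoCast_apply, MCoDelta_apply,
      Fin.sum_univ_add]
    have main1 : ∀ t : MSimplex M (j + 1 + k) (a + b),
        (∀ p : Fin (j + 1 + k + 1), t.pts p = s.pts ⟨p.val, by have := p.isLt; omega⟩) →
        (∑ i : Fin j, (-1 : ℤ) ^ ((Fin.castAdd k i).val + 1) *
          (if h : M.FaceOK s (Fin.castAdd k i) then
            MCup M φ ψ (M.face s (Fin.castAdd k i) h) else 0))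
          = MCup M (MCoDelta M j a φ) ψ t := by
      intro t hT
      have hfr : ∀ (v : ℕ) (h1 : v < j + 2),
          frontT (j + 1) k t.pts ⟨v, h1⟩ = s.pts ⟨v, by omega⟩ := by
        intro v h1
        rw [show frontT (j + 1) k t.pts ⟨v, h1⟩ = t.pts ⟨v, by omega⟩ from rfl, hT]
      have hfront : ∀ i : Fin j, frontT j k (faceTuple s.pts (Fin.castAdd k i)) =
          faceTuple (frontT (j + 1) k t.pts) i := by
        intro i
        funext p
        rw [show frontT j k (faceTuple s.pts (Fin.castAdd k i)) p =
            faceTuple s.pts (Fin.castAdd k i) ⟨p.val, by have := p.isLt; omega⟩ from rfl,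
          faceTuple_apply, faceTuple_apply]
        by_cases hc : p.val < i.val + 1
        · rw [if_pos (show p.val < (Fin.castAdd k i).val + 1 from hc), if_pos hc, hfr]
        · rw [if_neg (show ¬(p.val < (Fin.castAdd k i).val + 1) from hc), if_neg hc, hfr]
      have hback : ∀ i : Fin j, backT j k (faceTuple s.pts (Fin.castAdd k i)) =
          backT (j + 1) k t.pts := by
        intro i
        funext p
        rw [show backT j k (faceTuple s.pts (Fin.castAdd k i)) p =
            faceTuple s.pts (Fin.castAdd k i) ⟨j + p.val, by have := p.isLt; omega⟩ from rfl,
          faceTuple_apply,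
          if_neg (show ¬(j + p.val < (Fin.castAdd k i).val + 1) by
            have := i.isLt; simp only [Fin.coe_castAdd]; omega),
          show backT (j + 1) k t.pts p = t.pts ⟨j + 1 + p.val, by have := p.isLt; omega⟩ from rfl,
          hT]
        exact congrArg s.pts (by simp only [Fin.mk.injEq]; omega)
      by_cases hC : M.len (frontT (j + 1) k t.pts) = (a : ℝ≥0∞) ∧
          M.len (backT (j + 1) k t.pts) = (b : ℝ≥0∞)
      · rw [MCup_apply M (MCoDelta M j a φ) ψ t hC.1 hC.2, MCoDelta_apply, Finset.sum_mul]
        refine Finset.sum_congr rfl fun i _ => ?_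
        rw [mul_assoc]
        refine congrArg₂ (· * ·) rfl ?_
        by_cases hF : M.FaceOK
            (⟨frontT (j + 1) k t.pts, SepTuple.front (j := j + 1) (k := k) t.sep, hC.1⟩ :
              MSimplex M (j + 1) a) i
        · have geo1 : M.d (s.pts ⟨i.val, by have := i.isLt; omega⟩)
              (s.pts ⟨i.val + 2, by have := i.isLt; omega⟩) =
              M.d (s.pts ⟨i.val, by have := i.isLt; omega⟩)
                (s.pts ⟨i.val + 1, by have := i.isLt; omega⟩) +
              M.d (s.pts ⟨i.val + 1, by have := i.isLt; omega⟩)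
                (s.pts ⟨i.val + 2, by have := i.isLt; omega⟩) := by
            have h1 : M.d (frontT (j + 1) k t.pts ⟨i.val, by have := i.isLt; omega⟩)
                (frontT (j + 1) k t.pts ⟨i.val + 2, by have := i.isLt; omega⟩) =
                M.d (frontT (j + 1) k t.pts ⟨i.val, by have := i.isLt; omega⟩)
                  (frontT (j + 1) k t.pts ⟨i.val + 1, by have := i.isLt; omega⟩) +
                M.d (frontT (j + 1) k t.pts ⟨i.val + 1, by have := i.isLt; omega⟩)
                  (frontT (j + 1) k t.pts ⟨i.val + 2, by have := i.isLt; omega⟩) := hF.1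
            rw [hfr, hfr, hfr] at h1
            exact h1
          have hOK : M.FaceOK s (Fin.castAdd k i) := by
            refine ⟨geo1, ?_, ?_⟩
            · intro p
              rcases Nat.lt_or_ge p.val j with hp | hp
              · have hsep : SepTuple (frontT j k (faceTuple s.pts (Fin.castAdd k i))) := by
                  rw [hfront i]; exact hF.2.1
                exact hsep ⟨p.val, hp⟩
              · rw [faceTuple_apply, faceTuple_apply,
                  if_neg (show ¬((p.castSucc : Fin (j + k + 1)).val < (Fin.castAdd k i).val + 1) by
                    have := i.isLt; simp only [Fin.coe_castSucc, Fin.coe_castAdd]; omega),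
                  if_neg (show ¬((p.succ : Fin (j + k + 1)).val < (Fin.castAdd k i).val + 1) by
                    have := i.isLt; simp only [Fin.val_succ, Fin.coe_castAdd]; omega)]
                exact s.sep ⟨p.val + 1, by have := p.isLt; omega⟩
            · rw [M.len_faceTuple s.pts (Fin.castAdd k i) geo1]
              exact s.len_eq
          have hQ1 : M.len (frontT j k (faceTuple s.pts (Fin.castAdd k i))) = (a : ℝ≥0∞) := by
            rw [hfront i]; exact hF.2.2
          have hQ2 : M.len (backT j k (faceTuple s.pts (Fin.castAdd k i))) = (b : ℝ≥0∞) := by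
            rw [hback i]; exact hC.2
          simp only [dif_pos hOK, dif_pos hF,
            MCup_apply M φ ψ (M.face s (Fin.castAdd k i) hOK) hQ1 hQ2]
          exact congrArg₂ (· * ·) (mco_congr φ (hfront i)) (mco_congr ψ (hback i))
        · by_cases hOK : M.FaceOK s (Fin.castAdd k i)
          · have hz : MCup M φ ψ (M.face s (Fin.castAdd k i) hOK) = 0 := by
              apply MCup_eq_zero
              intro hq
              have hq1 : M.len (frontT j k (faceTuple s.pts (Fin.castAdd k i))) = (a : ℝ≥0∞) :=
                hq.1
              refine hF ⟨?_, ?_, ?_⟩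
              · show M.d (frontT (j + 1) k t.pts ⟨i.val, by have := i.isLt; omega⟩)
                    (frontT (j + 1) k t.pts ⟨i.val + 2, by have := i.isLt; omega⟩) =
                  M.d (frontT (j + 1) k t.pts ⟨i.val, by have := i.isLt; omega⟩)
                    (frontT (j + 1) k t.pts ⟨i.val + 1, by have := i.isLt; omega⟩) +
                  M.d (frontT (j + 1) k t.pts ⟨i.val + 1, by have := i.isLt; omega⟩)
                    (frontT (j + 1) k t.pts ⟨i.val + 2, by have := i.isLt; omega⟩)
                rw [hfr, hfr, hfr]
                exact hOK.1
              · show SepTuple (faceTuple (frontT (j + 1) k t.pts) i)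
                rw [← hfront i]
                exact (hOK.2.1).front
              · show M.len (faceTuple (frontT (j + 1) k t.pts) i) = (a : ℝ≥0∞)
                rw [← hfront i]
                exact hq1
            simp only [dif_pos hOK, dif_neg hF, hz, zero_mul]
          · simp only [dif_neg hOK, dif_neg hF, zero_mul]
      · rw [MCup_eq_zero M (MCoDelta M j a φ) ψ t hC]
        refine Finset.sum_eq_zero fun i _ => ?_
        by_cases hOK : M.FaceOK s (Fin.castAdd k i)
        · have geoF : M.d (frontT (j + 1) k t.pts ⟨i.val, by have := i.isLt; omega⟩)
              (frontT (j + 1) k t.pts ⟨i.val + 2, by have := i.isLt; omega⟩) =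
              M.d (frontT (j + 1) k t.pts ⟨i.val, by have := i.isLt; omega⟩)
                (frontT (j + 1) k t.pts ⟨i.val + 1, by have := i.isLt; omega⟩) +
              M.d (frontT (j + 1) k t.pts ⟨i.val + 1, by have := i.isLt; omega⟩)
                (frontT (j + 1) k t.pts ⟨i.val + 2, by have := i.isLt; omega⟩) := by
            rw [hfr, hfr, hfr]
            exact hOK.1
          have hz : MCup M φ ψ (M.face s (Fin.castAdd k i) hOK) = 0 := by
            apply MCup_eq_zero
            intro hq
            have hq1 : M.len (frontT j k (faceTuple s.pts (Fin.castAdd k i))) = (a : ℝ≥0∞) := hq.1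
            have hq2 : M.len (backT j k (faceTuple s.pts (Fin.castAdd k i))) = (b : ℝ≥0∞) := hq.2
            refine hC ⟨?_, ?_⟩
            · rw [← M.len_faceTuple (frontT (j + 1) k t.pts) i geoF, ← hfront i]
              exact hq1
            · rw [← hback i]
              exact hq2
          simp only [dif_pos hOK, hz, mul_zero]
        · simp only [dif_neg hOK, mul_zero]
    have main2 : (∑ i : Fin k, (-1 : ℤ) ^ ((Fin.natAdd j i).val + 1) *
          (if h : M.FaceOK s (Fin.natAdd j i) then
            MCup M φ ψ (M.face s (Fin.natAdd j i) h) else 0))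
          = (-1 : ℤ) ^ j * MCup M φ (MCoDelta M k b ψ) s := by
      have hba : ∀ (v : ℕ) (h1 : v < k + 2),
          backT j (k + 1) s.pts ⟨v, h1⟩ = s.pts ⟨j + v, by omega⟩ :=
        fun v h1 => rfl
      have hfront2 : ∀ i : Fin k, frontT j k (faceTuple s.pts (Fin.natAdd j i)) =
          frontT j (k + 1) s.pts := by
        intro i
        funext p
        rw [show frontT j k (faceTuple s.pts (Fin.natAdd j i)) p =
            faceTuple s.pts (Fin.natAdd j i) ⟨p.val, by have := p.isLt; omega⟩ from rfl,
          faceTuple_apply,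
          if_pos (show p.val < (Fin.natAdd j i).val + 1 by
            have := p.isLt; simp only [Fin.coe_natAdd]; omega)]
        rfl
      have hback2 : ∀ i : Fin k, backT j k (faceTuple s.pts (Fin.natAdd j i)) =
          faceTuple (backT j (k + 1) s.pts) i := by
        intro i
        funext p
        rw [show backT j k (faceTuple s.pts (Fin.natAdd j i)) p =
            faceTuple s.pts (Fin.natAdd j i) ⟨j + p.val, by have := p.isLt; omega⟩ from rfl,
          faceTuple_apply, faceTuple_apply]
        by_cases hc : p.val < i.val + 1
        · rw [if_pos (show j + p.val < (Fin.natAdd j i).val + 1 by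
              simp only [Fin.coe_natAdd]; omega), if_pos hc, hba]
        · rw [if_neg (show ¬(j + p.val < (Fin.natAdd j i).val + 1) by
              simp only [Fin.coe_natAdd]; omega), if_neg hc, hba]
          exact congrArg s.pts (by simp only [Fin.mk.injEq]; omega)
      have hsign : ∀ i : Fin k, ((-1 : ℤ)) ^ ((Fin.natAdd j i).val + 1) =
          (-1 : ℤ) ^ j * (-1 : ℤ) ^ (i.val + 1) := by
        intro i
        rw [show (Fin.natAdd j i).val + 1 = j + (i.val + 1) from rfl, pow_add]
      have hpull : (∑ i : Fin k, (-1 : ℤ) ^ ((Fin.natAdd j i).val + 1) *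
            (if h : M.FaceOK s (Fin.natAdd j i) then
              MCup M φ ψ (M.face s (Fin.natAdd j i) h) else 0))
          = (-1 : ℤ) ^ j * ∑ i : Fin k, (-1 : ℤ) ^ (i.val + 1) *
            (if h : M.FaceOK s (Fin.natAdd j i) then
              MCup M φ ψ (M.face s (Fin.natAdd j i) h) else 0) := by
        rw [Finset.mul_sum]
        refine Finset.sum_congr rfl fun i _ => ?_
        rw [hsign i, mul_assoc]
      rw [hpull]
      by_cases hC : M.len (frontT j (k + 1) s.pts) = (a : ℝ≥0∞) ∧
          M.len (backT j (k + 1) s.pts) = (b : ℝ≥0∞)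
      · rw [MCup_apply M φ (MCoDelta M k b ψ) s hC.1 hC.2, MCoDelta_apply]
        refine congrArg₂ (· * ·) rfl ?_
        rw [Finset.mul_sum]
        refine Finset.sum_congr rfl fun i _ => ?_
        rw [mul_left_comm]
        refine congrArg₂ (· * ·) rfl ?_
        by_cases hF : M.FaceOK
            (⟨backT j (k + 1) s.pts, SepTuple.back (j := j) (k := k + 1) s.sep, hC.2⟩ :
              MSimplex M (k + 1) b) i
        · have geo1 : M.d (s.pts ⟨j + i.val, by have := i.isLt; omega⟩)
              (s.pts ⟨j + i.val + 2, by have := i.isLt; omega⟩) =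
              M.d (s.pts ⟨j + i.val, by have := i.isLt; omega⟩)
                (s.pts ⟨j + i.val + 1, by have := i.isLt; omega⟩) +
              M.d (s.pts ⟨j + i.val + 1, by have := i.isLt; omega⟩)
                (s.pts ⟨j + i.val + 2, by have := i.isLt; omega⟩) := by
            have h1 : M.d (backT j (k + 1) s.pts ⟨i.val, by have := i.isLt; omega⟩)
                (backT j (k + 1) s.pts ⟨i.val + 2, by have := i.isLt; omega⟩) =
                M.d (backT j (k + 1) s.pts ⟨i.val, by have := i.isLt; omega⟩)
                  (backT j (k + 1) s.pts ⟨i.val + 1, by have := i.isLt; omega⟩) +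
                M.d (backT j (k + 1) s.pts ⟨i.val + 1, by have := i.isLt; omega⟩)
                  (backT j (k + 1) s.pts ⟨i.val + 2, by have := i.isLt; omega⟩) := hF.1
            rw [hba, hba, hba] at h1
            exact h1
          have hOK : M.FaceOK s (Fin.natAdd j i) := by
            refine ⟨geo1, ?_, ?_⟩
            · intro p
              rcases Nat.lt_or_ge p.val j with hp | hp
              · rw [faceTuple_apply, faceTuple_apply,
                  if_pos (show (p.castSucc : Fin (j + k + 1)).val < (Fin.natAdd j i).val + 1 by
                    simp only [Fin.coe_castSucc, Fin.coe_natAdd]; omega),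
                  if_pos (show (p.succ : Fin (j + k + 1)).val < (Fin.natAdd j i).val + 1 by
                    simp only [Fin.val_succ, Fin.coe_natAdd]; omega)]
                exact s.sep ⟨p.val, by have := p.isLt; omega⟩
              · have hsep : SepTuple (backT j k (faceTuple s.pts (Fin.natAdd j i))) := by
                  rw [hback2 i]; exact hF.2.1
                have h2 := hsep ⟨p.val - j, by have := p.isLt; omega⟩
                rw [show (p.castSucc : Fin (j + k + 1)) =
                    ⟨j + (p.val - j), by have := p.isLt; omega⟩ from
                    Fin.ext (by simp only [Fin.coe_castSucc]; omega),
                  show (p.succ : Fin (j + k + 1)) =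
                    ⟨j + (p.val - j) + 1, by have := p.isLt; omega⟩ from
                    Fin.ext (by simp only [Fin.val_succ]; omega)]
                exact h2
            · rw [M.len_faceTuple s.pts (Fin.natAdd j i) geo1]
              exact s.len_eq
          have hQ1 : M.len (frontT j k (faceTuple s.pts (Fin.natAdd j i))) = (a : ℝ≥0∞) := by
            rw [hfront2 i]; exact hC.1
          have hQ2 : M.len (backT j k (faceTuple s.pts (Fin.natAdd j i))) = (b : ℝ≥0∞) := by
            rw [hback2 i]; exact hF.2.2
          simp only [dif_pos hOK, dif_pos hF,
            MCup_apply M φ ψ (M.face s (Fin.natAdd j i) hOK) hQ1 hQ2]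
          exact congrArg₂ (· * ·) (mco_congr φ (hfront2 i)) (mco_congr ψ (hback2 i))
        · by_cases hOK : M.FaceOK s (Fin.natAdd j i)
          · have hz : MCup M φ ψ (M.face s (Fin.natAdd j i) hOK) = 0 := by
              apply MCup_eq_zero
              intro hq
              have hq2 : M.len (backT j k (faceTuple s.pts (Fin.natAdd j i))) = (b : ℝ≥0∞) :=
                hq.2
              refine hF ⟨?_, ?_, ?_⟩
              · show M.d (backT j (k + 1) s.pts ⟨i.val, by have := i.isLt; omega⟩)
                    (backT j (k + 1) s.pts ⟨i.val + 2, by have := i.isLt; omega⟩) =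
                  M.d (backT j (k + 1) s.pts ⟨i.val, by have := i.isLt; omega⟩)
                    (backT j (k + 1) s.pts ⟨i.val + 1, by have := i.isLt; omega⟩) +
                  M.d (backT j (k + 1) s.pts ⟨i.val + 1, by have := i.isLt; omega⟩)
                    (backT j (k + 1) s.pts ⟨i.val + 2, by have := i.isLt; omega⟩)
                rw [hba, hba, hba]
                exact hOK.1
              · show SepTuple (faceTuple (backT j (k + 1) s.pts) i)
                rw [← hback2 i]
                exact (hOK.2.1).back
              · show M.len (faceTuple (backT j (k + 1) s.pts) i) = (b : ℝ≥0∞)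
                rw [← hback2 i]
                exact hq2
            simp only [dif_pos hOK, dif_neg hF, hz, mul_zero]
          · simp only [dif_neg hOK, dif_neg hF, mul_zero]
      · have hsum : (∑ i : Fin k, (-1 : ℤ) ^ (i.val + 1) *
            (if h : M.FaceOK s (Fin.natAdd j i) then
              MCup M φ ψ (M.face s (Fin.natAdd j i) h) else 0)) = 0 := by
          refine Finset.sum_eq_zero fun i _ => ?_
          by_cases hOK : M.FaceOK s (Fin.natAdd j i)
          · have geoB : M.d (backT j (k + 1) s.pts ⟨i.val, by have := i.isLt; omega⟩)
                (backT j (k + 1) s.pts ⟨i.val + 2, by have := i.isLt; omega⟩) =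
                M.d (backT j (k + 1) s.pts ⟨i.val, by have := i.isLt; omega⟩)
                  (backT j (k + 1) s.pts ⟨i.val + 1, by have := i.isLt; omega⟩) +
                M.d (backT j (k + 1) s.pts ⟨i.val + 1, by have := i.isLt; omega⟩)
                  (backT j (k + 1) s.pts ⟨i.val + 2, by have := i.isLt; omega⟩) := by
              rw [hba, hba, hba]
              exact hOK.1
            have hz : MCup M φ ψ (M.face s (Fin.natAdd j i) hOK) = 0 := by
              apply MCup_eq_zero
              intro hq
              have hq1 : M.len (frontT j k (faceTuple s.pts (Fin.natAdd j i))) = (a : ℝ≥0∞) := hq.1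
              have hq2 : M.len (backT j k (faceTuple s.pts (Fin.natAdd j i))) = (b : ℝ≥0∞) := hq.2
              refine hC ⟨?_, ?_⟩
              · rw [← hfront2 i]
                exact hq1
              · rw [← M.len_faceTuple (backT j (k + 1) s.pts) i geoB, ← hback2 i]
                exact hq2
            simp only [dif_pos hOK, hz, mul_zero]
          · simp only [dif_neg hOK, mul_zero]
        rw [MCup_eq_zero M φ (MCoDelta M k b ψ) s hC, hsum, mul_zero]
    exact congrArg₂ (· + ·) (main1 _ fun p => reindexS_pts _ _ _ _) main2

end
end
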